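/- arXiv:2408.16454 — 3 statements merged into one kernel-verified Lean document; each statement's English description precedes it below -/
import Mathlib

section
/- For every t ≥ 0, every mass m > 0, every speed of light c > 0 and every δ > 0, one has √(c²t² + m²c⁴) − mc² + δ ≥ B·t, where B = min{ 2δ^{1/2}/(2√5·m)^{1/2}, c/2 }. -/
open Real

/-- Scalar form of the operator bound `H_c = √(c²|p|² + m²c⁴) − mc² + δ ≥ B|p|`
with `B = min{2δ^{1/2}/(2√5 m)^{1/2}, c/2}`. -/
theorem sqrt_kinetic_lower_bound (t m c δ : ℝ) (ht : 0 ≤ t) (hm : 0 < m)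
    (hc : 0 < c) (hδ : 0 < δ) :
    min (2 * δ ^ ((1 : ℝ) / 2) / (2 * Real.sqrt 5 * m) ^ ((1 : ℝ) / 2)) (c / 2) * t ≤
      Real.sqrt (c ^ 2 * t ^ 2 + m ^ 2 * c ^ 4) - m * c ^ 2 + δ := by
  rw [← Real.sqrt_eq_rpow, ← Real.sqrt_eq_rpow]
  have hs5 : (2:ℝ) < Real.sqrt 5 := by
    nlinarith [Real.sq_sqrt (by norm_num : (0:ℝ) ≤ 5), Real.sqrt_nonneg 5]
  set a : ℝ := 2 * Real.sqrt 5 * m with ha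
  have ha0 : 0 < a := by nlinarith
  have hS : 0 ≤ c ^ 2 * t ^ 2 + m ^ 2 * c ^ 4 := by positivity
  rcases le_total t (2 * m * c) with h | h
  · -- small t : √S ≥ mc² + t²/a, then AM-GM
    have key : m * c ^ 2 + t ^ 2 / a ≤ Real.sqrt (c ^ 2 * t ^ 2 + m ^ 2 * c ^ 4) := by
      rw [show Real.sqrt (c ^ 2 * t ^ 2 + m ^ 2 * c ^ 4) =
          Real.sqrt (c ^ 2 * t ^ 2 + m ^ 2 * c ^ 4) from rfl]
      have h1 : 0 ≤ m * c ^ 2 + t ^ 2 / a := by positivity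
      rw [show m * c ^ 2 + t ^ 2 / a = Real.sqrt ((m * c ^ 2 + t ^ 2 / a) ^ 2) from
        (Real.sqrt_sq h1).symm]
      apply Real.sqrt_le_sqrt
      have expand : (m * c ^ 2 + t ^ 2 / a) ^ 2 =
          m ^ 2 * c ^ 4 + 2 * m * c ^ 2 * t ^ 2 / a + t ^ 4 / a ^ 2 := by ring
      rw [expand]
      have h2 : 2 * m * c ^ 2 * t ^ 2 / a + t ^ 4 / a ^ 2 ≤ c ^ 2 * t ^ 2 := by
        rw [div_add_div _ _ (ne_of_gt ha0) (ne_of_gt (by positivity : (0:ℝ) < a ^ 2)),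
          div_le_iff₀ (by positivity : (0:ℝ) < a * a ^ 2)]
        have hsq : Real.sqrt 5 ^ 2 = 5 := Real.sq_sqrt (by norm_num)
        have ht2 : t ^ 2 ≤ 4 * m ^ 2 * c ^ 2 := by nlinarith
        have h5 : (2 : ℝ) * m * a ^ 2 + 4 * m ^ 2 * c ^ 0 * a ≤ a * a ^ 2 / c ^ 0 := by
          simp only [pow_zero, div_one, mul_one]
          rw [ha]
          have hsq2 : (2 * Real.sqrt 5 * m) ^ 2 = 20 * m ^ 2 := by nlinarith [hsq]
          rw [hsq2]
          nlinarith [hs5, mul_pos (mul_pos hm hm) hm]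
        simp only [pow_zero, div_one, mul_one] at h5
        nlinarith [mul_le_mul_of_nonneg_left h5
            (mul_nonneg (sq_nonneg c) (sq_nonneg t)),
          mul_le_mul_of_nonneg_left ht2
            (mul_nonneg ha0.le (sq_nonneg t))]
      linarith
    -- AM-GM part
    have hsa : 0 < Real.sqrt a := Real.sqrt_pos.mpr ha0
    have amgm : 2 * Real.sqrt δ / Real.sqrt a * t ≤ t ^ 2 / a + δ := by
      have hu : t ^ 2 / a = (t / Real.sqrt a) ^ 2 := by
        rw [div_pow, Real.sq_sqrt ha0.le]
      have ht' : 2 * Real.sqrt δ / Real.sqrt a * t = 2 * Real.sqrt δ * (t / Real.sqrt a) := by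
        ring
      rw [hu, ht']
      nlinarith [sq_nonneg (t / Real.sqrt a - Real.sqrt δ),
        Real.sq_sqrt hδ.le, Real.sqrt_nonneg δ, Real.sqrt_nonneg a]
    calc min (2 * Real.sqrt δ / Real.sqrt a) (c / 2) * t
        ≤ 2 * Real.sqrt δ / Real.sqrt a * t := by
          apply mul_le_mul_of_nonneg_right (min_le_left _ _) ht
      _ ≤ t ^ 2 / a + δ := amgm
      _ ≤ Real.sqrt (c ^ 2 * t ^ 2 + m ^ 2 * c ^ 4) - m * c ^ 2 + δ := by linarith
  · -- large t : √S ≥ c t ≥ (c/2) t + m c²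
    have key : c * t ≤ Real.sqrt (c ^ 2 * t ^ 2 + m ^ 2 * c ^ 4) := by
      rw [show c * t = Real.sqrt ((c * t) ^ 2) from
        (Real.sqrt_sq (by positivity)).symm]
      apply Real.sqrt_le_sqrt; nlinarith [sq_nonneg (m * c ^ 2)]
    have hmc : m * c ^ 2 ≤ c / 2 * t := by nlinarith
    calc min (2 * Real.sqrt δ / Real.sqrt a) (c / 2) * t
        ≤ c / 2 * t := mul_le_mul_of_nonneg_right (min_le_right _ _) ht
      _ ≤ c * t - m * c ^ 2 + δ := by nlinarith
      _ ≤ Real.sqrt (c ^ 2 * t ^ 2 + m ^ 2 * c ^ 4) - m * c ^ 2 + δ := by linarith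
end

section
/- For every c > 1, every m > 0 and every t ≥ 0, one has t⁴/(8m(t² + m²)) · (1/c²) ≤ t²/(2m) − (√(c²t² + m²c⁴) − mc²) ≤ t⁴/(8m³) · (1/c²). -/
/-!
With `E = √(c²t² + m²c⁴)` one has `E² − (mc²)² = c²t²`, so the gap between the
nonrelativistic symbol and `E − mc²` is exactly `c²t⁴ / (2m (E + mc²)²)`. Both bounds follow
from `2mc² ≤ E + mc² ≤ 2E` and `E² ≤ c⁴(t² + m²)` for `c ≥ 1`.
-/

namespace Real

variable {a x : ℝ}

/-- The remainder of the first-order Taylor expansion of `√(a² + x)` around `x = 0`. -/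
theorem div_two_mul_sub_sqrt_sq_add_sub_eq (ha : 0 < a) (hx : 0 ≤ x) :
    x / (2 * a) - (√(a ^ 2 + x) - a) = x ^ 2 / (2 * a * (√(a ^ 2 + x) + a) ^ 2) := by
  have hs : √(a ^ 2 + x) ^ 2 = a ^ 2 + x := sq_sqrt (by positivity)
  have : √(a ^ 2 + x) + a ≠ 0 := by positivity
  field_simp
  linear_combination (x - 2 * a * √(a ^ 2 + x) - 2 * a ^ 2) * hs

theorem div_two_mul_sub_sqrt_sq_add_sub_le (ha : 0 < a) (hx : 0 ≤ x) :
    x / (2 * a) - (√(a ^ 2 + x) - a) ≤ x ^ 2 / (8 * a ^ 3) := by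
  have hs : a ≤ √(a ^ 2 + x) := le_sqrt_of_sq_le (by linarith)
  rw [div_two_mul_sub_sqrt_sq_add_sub_eq ha hx]
  calc x ^ 2 / (2 * a * (√(a ^ 2 + x) + a) ^ 2)
      ≤ x ^ 2 / (2 * a * (a + a) ^ 2) := by gcongr
    _ = x ^ 2 / (8 * a ^ 3) := by ring

theorem le_div_two_mul_sub_sqrt_sq_add_sub (ha : 0 < a) (hx : 0 ≤ x) :
    x ^ 2 / (8 * a * (a ^ 2 + x)) ≤ x / (2 * a) - (√(a ^ 2 + x) - a) := by
  have hs : a ≤ √(a ^ 2 + x) := le_sqrt_of_sq_le (by linarith)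
  rw [div_two_mul_sub_sqrt_sq_add_sub_eq ha hx]
  calc x ^ 2 / (8 * a * (a ^ 2 + x))
      = x ^ 2 / (2 * a * (√(a ^ 2 + x) + √(a ^ 2 + x)) ^ 2) := by
        rw [← two_mul, mul_pow, sq_sqrt (by positivity)]; ring
    _ ≤ x ^ 2 / (2 * a * (√(a ^ 2 + x) + a) ^ 2) := by gcongr

end Real

theorem kinetic_symbol_two_sided_bound_general (c m t : ℝ) (hc : 1 < c) (hm : 0 < m) :
    t ^ 4 / (8 * m * (t ^ 2 + m ^ 2)) * (1 / c ^ 2) ≤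
        t ^ 2 / (2 * m) - (Real.sqrt (c ^ 2 * t ^ 2 + m ^ 2 * c ^ 4) - m * c ^ 2) ∧
      t ^ 2 / (2 * m) - (Real.sqrt (c ^ 2 * t ^ 2 + m ^ 2 * c ^ 4) - m * c ^ 2) ≤
        t ^ 4 / (8 * m ^ 3) * (1 / c ^ 2) := by
  have hc0 : 0 < c := one_pos.trans hc
  have ha : 0 < m * c ^ 2 := by positivity
  have hx : 0 ≤ c ^ 2 * t ^ 2 := by positivity
  have hdeficit : t ^ 2 / (2 * m) - (√(c ^ 2 * t ^ 2 + m ^ 2 * c ^ 4) - m * c ^ 2) =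
      c ^ 2 * t ^ 2 / (2 * (m * c ^ 2)) - (√((m * c ^ 2) ^ 2 + c ^ 2 * t ^ 2) - m * c ^ 2) := by
    congr 1
    · field_simp
    · ring_nf
  rw [hdeficit]
  constructor
  · refine le_trans ?_ (Real.le_div_two_mul_sub_sqrt_sq_add_sub ha hx)
    have hc2 : 1 ≤ c ^ 2 := one_le_pow₀ hc.le
    calc t ^ 4 / (8 * m * (t ^ 2 + m ^ 2)) * (1 / c ^ 2)
        = t ^ 4 / (8 * m * (c ^ 2 * t ^ 2 + m ^ 2 * c ^ 2)) := by field_simp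
      _ ≤ t ^ 4 / (8 * m * (t ^ 2 + m ^ 2 * c ^ 2)) := by gcongr; exact le_mul_of_one_le_left (sq_nonneg t) hc2
      _ = (c ^ 2 * t ^ 2) ^ 2 / (8 * (m * c ^ 2) * ((m * c ^ 2) ^ 2 + c ^ 2 * t ^ 2)) := by
        field_simp; ring
  · refine (Real.div_two_mul_sub_sqrt_sq_add_sub_le ha hx).trans_eq ?_
    field_simp

/-- Scalar form of the two-sided comparison between the nonrelativistic symbol
`t²/(2m)` and the pseudo-relativistic symbol `√(c²t² + m²c⁴) − mc²`, for `c > 1`. -/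
theorem kinetic_symbol_two_sided_bound (c m t : ℝ) (hc : 1 < c) (hm : 0 < m)
    (ht : 0 ≤ t) :
    t ^ 4 / (8 * m * (t ^ 2 + m ^ 2)) * (1 / c ^ 2) ≤
        t ^ 2 / (2 * m) - (Real.sqrt (c ^ 2 * t ^ 2 + m ^ 2 * c ^ 4) - m * c ^ 2) ∧
      t ^ 2 / (2 * m) - (Real.sqrt (c ^ 2 * t ^ 2 + m ^ 2 * c ^ 4) - m * c ^ 2) ≤
        t ^ 4 / (8 * m ^ 3) * (1 / c ^ 2) :=
  kinetic_symbol_two_sided_bound_general c m t hc hm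
end

section
/- Let m > 0, q ≥ 1, κ > 0, and let ρ_∞ be a minimizer of E_∞(N). Then ρ_∞ satisfies the Virial identity (3/(5m))(6π²/q)^{2/3} ∫_{ℝ³} ρ_∞(x)^{5/3} dx = κ D(ρ_∞, ρ_∞); equivalently, κ D(ρ_∞, ρ_∞) = −2 𝔈_∞(ρ_∞) = 2 ∫_{ℝ³} j_∞(ρ_∞(x)) dx. -/
open MeasureTheory Real Filter

noncomputable section

/-- Three-dimensional Euclidean space. -/
abbrev E3 := EuclideanSpace ℝ (Fin 3)

/-- The Coulomb/Newtonian self-interaction energy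
`D(ρ,ρ) = (1/2) ∫∫ ρ(x)ρ(y)/|x−y| dx dy`. -/
def Dint (ρ : E3 → ℝ) : ℝ :=
  (1 / 2) * ∫ x : E3, ∫ y : E3, ρ x * ρ y / ‖x - y‖

/-- The pseudo-relativistic kinetic energy density
`j_{mc}(t) = (q/(8π³)) ∫_{|p| < (6π²t/q)^{1/3}} (√(c²|p|² + m²c⁴) − mc²) dp`. -/
def jmc (q m c t : ℝ) : ℝ :=
  (q / (8 * π ^ 3)) *
    ∫ p in Metric.ball (0 : E3) ((6 * π ^ 2 * t / q) ^ ((1 : ℝ) / 3)),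
      (Real.sqrt (c ^ 2 * ‖p‖ ^ 2 + m ^ 2 * c ^ 4) - m * c ^ 2)

/-- The nonrelativistic kinetic energy density
`j_∞(t) = (3/(10m)) (6π²/q)^{2/3} t^{5/3}`. -/
def jinf (q m t : ℝ) : ℝ :=
  (3 / (10 * m)) * (6 * π ^ 2 / q) ^ ((2 : ℝ) / 3) * t ^ ((5 : ℝ) / 3)

/-- The Chandrasekhar energy functional `𝔈_c(ρ) = ∫ j_{mc}(ρ) − κ D(ρ,ρ)`. -/
def Ecfun (q m c κ : ℝ) (ρ : E3 → ℝ) : ℝ :=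
  (∫ x : E3, jmc q m c (ρ x)) - κ * Dint ρ

/-- The limit (nonrelativistic) energy functional `𝔈_∞(ρ) = ∫ j_∞(ρ) − κ D(ρ,ρ)`. -/
def Einffun (q m κ : ℝ) (ρ : E3 → ℝ) : ℝ :=
  (∫ x : E3, jinf q m (ρ x)) - κ * Dint ρ

/-- Admissible class for `E_c(N)`: nonnegative `ρ ∈ L¹ ∩ L^{4/3}` with `∫ρ = N`. -/
def AdmC (N : ℝ) (ρ : E3 → ℝ) : Prop :=
  (∀ x, 0 ≤ ρ x) ∧ Integrable ρ ∧ Integrable (fun x => ρ x ^ ((4 : ℝ) / 3)) ∧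
    (∫ x : E3, ρ x) = N

/-- Admissible class for `E_∞(N)`: nonnegative `ρ ∈ L¹ ∩ L^{5/3}` with `∫ρ = N`. -/
def AdmInf (N : ℝ) (ρ : E3 → ℝ) : Prop :=
  (∀ x, 0 ≤ ρ x) ∧ Integrable ρ ∧ Integrable (fun x => ρ x ^ ((5 : ℝ) / 3)) ∧
    (∫ x : E3, ρ x) = N

/-- The Chandrasekhar ground state energy `E_c(N)`. -/
def EC (q m c κ N : ℝ) : ℝ := sInf (Ecfun q m c κ '' {ρ | AdmC N ρ})

/-- The limit ground state energy `E_∞(N)`. -/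
def EInf (q m κ N : ℝ) : ℝ := sInf (Einffun q m κ '' {ρ | AdmInf N ρ})

/-- `ρ` is a minimizer of `E_c(N)`. -/
def IsMinC (q m c κ N : ℝ) (ρ : E3 → ℝ) : Prop :=
  AdmC N ρ ∧ Ecfun q m c κ ρ = EC q m c κ N

/-- `ρ` is a minimizer of `E_∞(N)`. -/
def IsMinInf (q m κ N : ℝ) (ρ : E3 → ℝ) : Prop :=
  AdmInf N ρ ∧ Einffun q m κ ρ = EInf q m κ N

/-- `ρ` is symmetric (radial) decreasing. -/
def SymDec (ρ : E3 → ℝ) : Prop := ∀ x y : E3, ‖x‖ ≤ ‖y‖ → ρ y ≤ ρ x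

/-- `Nstar` is the optimal (largest) constant in the inequality
`κ N_*^{2/3} D(ρ,ρ) ≤ (3/4)(6π²/q)^{1/3} ‖ρ‖_{4/3}^{4/3} ‖ρ‖_1^{2/3}`. -/
def IsNstar (q κ Nstar : ℝ) : Prop :=
  IsGreatest {a : ℝ | 0 < a ∧ ∀ ρ : E3 → ℝ, (∀ x, 0 ≤ ρ x) → Integrable ρ →
    Integrable (fun x => ρ x ^ ((4 : ℝ) / 3)) →
    κ * a ^ ((2 : ℝ) / 3) * Dint ρ ≤
      (3 / 4) * (6 * π ^ 2 / q) ^ ((1 : ℝ) / 3) *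
        (∫ x : E3, ρ x ^ ((4 : ℝ) / 3)) * (∫ x : E3, ρ x) ^ ((2 : ℝ) / 3)} Nstar



section VirialAux

open Metric
open scoped ENNReal NNReal

lemma finrank_E3 : Module.finrank ℝ E3 = 3 := by simp

lemma integral_comp_smul_E3 (f : E3 → ℝ) {l : ℝ} (hl : 0 < l) :
    ∫ x : E3, f (l • x) = (l ^ 3)⁻¹ * ∫ x : E3, f x := by
  rw [Measure.integral_comp_smul volume f l, finrank_E3, abs_of_pos (by positivity),
    smul_eq_mul]

lemma Dint_scale (ρ : E3 → ℝ) {l : ℝ} (hl : 0 < l) :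
    Dint (fun x => l ^ 3 * ρ (l • x)) = l * Dint ρ := by
  have hnorm : ∀ x y : E3, ‖l • x - l • y‖ = l * ‖x - y‖ := by
    intro x y
    rw [← smul_sub, norm_smul, Real.norm_of_nonneg hl.le]
  have inner_eq : ∀ x : E3,
      (∫ y : E3, (l ^ 3 * ρ (l • x)) * (l ^ 3 * ρ (l • y)) / ‖x - y‖)
        = l ^ 4 * ∫ y : E3, ρ (l • x) * ρ y / ‖l • x - y‖ := by
    intro x
    have hfun : (fun y : E3 => (l ^ 3 * ρ (l • x)) * (l ^ 3 * ρ (l • y)) / ‖x - y‖)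
        = fun y : E3 => (fun y' : E3 => l ^ 7 * (ρ (l • x) * ρ y' / ‖l • x - y'‖)) (l • y) := by
      funext y
      simp only []
      rw [hnorm x y]
      rcases eq_or_ne ‖x - y‖ 0 with h | h
      · simp [h]
      · field_simp
    rw [hfun, integral_comp_smul_E3 (fun y' : E3 => l ^ 7 * (ρ (l • x) * ρ y' / ‖l • x - y'‖)) hl, integral_const_mul, ← mul_assoc]
    congr 1
    field_simp
  unfold Dint
  rw [integral_congr_ae (ae_of_all _ inner_eq)]
  have houter : (fun x : E3 => l ^ 4 * ∫ y : E3, ρ (l • x) * ρ y / ‖l • x - y‖)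
      = fun x : E3 => (fun u : E3 => l ^ 4 * ∫ y : E3, ρ u * ρ y / ‖u - y‖) (l • x) := rfl
  rw [houter, integral_comp_smul_E3 (fun u : E3 => l ^ 4 * ∫ y : E3, ρ u * ρ y / ‖u - y‖) hl, integral_const_mul]
  field_simp

lemma integrable_comp_smul_E3 {f : E3 → ℝ} (hf : Integrable f) {l : ℝ} (hl : 0 < l) :
    Integrable (fun x : E3 => f (l • x)) :=
  (integrable_comp_smul_iff volume f hl.ne').mpr hf

lemma pow53_scale {ρ : E3 → ℝ} (hρ0 : ∀ x, 0 ≤ ρ x) {l : ℝ} (hl : 0 < l) (x : E3) :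
    (l ^ 3 * ρ (l • x)) ^ ((5:ℝ)/3) = l ^ (5:ℕ) * (ρ (l • x)) ^ ((5:ℝ)/3) := by
  rw [Real.mul_rpow (by positivity) (hρ0 _)]
  congr 1
  rw [← Real.rpow_natCast l 3, ← Real.rpow_mul hl.le, ← Real.rpow_natCast l 5]
  norm_num

lemma AdmInf_scale {N : ℝ} {ρ : E3 → ℝ} (h : AdmInf N ρ) {l : ℝ} (hl : 0 < l) :
    AdmInf N (fun x => l ^ 3 * ρ (l • x)) := by
  obtain ⟨h0, h1, h53, hN⟩ := h
  refine ⟨fun x => mul_nonneg (by positivity) (h0 _), (integrable_comp_smul_E3 h1 hl).const_mul _, ?_, ?_⟩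
  · have : (fun x : E3 => (l ^ 3 * ρ (l • x)) ^ ((5:ℝ)/3))
        = fun x : E3 => l ^ (5:ℕ) * ((fun y => ρ y ^ ((5:ℝ)/3)) (l • x)) := by
      funext x; exact pow53_scale h0 hl x
    rw [this]
    exact (integrable_comp_smul_E3 h53 hl).const_mul _
  · rw [integral_const_mul, integral_comp_smul_E3 ρ hl, hN, ← mul_assoc]
    field_simp

lemma int53_scale {ρ : E3 → ℝ} (hρ0 : ∀ x, 0 ≤ ρ x) {l : ℝ} (hl : 0 < l) :
    (∫ x : E3, (l ^ 3 * ρ (l • x)) ^ ((5:ℝ)/3))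
      = l ^ (2:ℕ) * ∫ x : E3, ρ x ^ ((5:ℝ)/3) := by
  have : (fun x : E3 => (l ^ 3 * ρ (l • x)) ^ ((5:ℝ)/3))
      = fun x : E3 => l ^ (5:ℕ) * ((fun y => ρ y ^ ((5:ℝ)/3)) (l • x)) := by
    funext x; exact pow53_scale hρ0 hl x
  rw [this, integral_const_mul,
    integral_comp_smul_E3 (fun y : E3 => ρ y ^ ((5:ℝ)/3)) hl, ← mul_assoc]
  congr 1
  field_simp

lemma jinf_integral_eq (q m : ℝ) (ρ : E3 → ℝ) :
    (∫ x : E3, jinf q m (ρ x))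
      = (3 / (10 * m)) * (6 * π ^ 2 / q) ^ ((2 : ℝ) / 3) * ∫ x : E3, ρ x ^ ((5:ℝ)/3) := by
  unfold jinf
  rw [← integral_const_mul]

lemma integrableOn_ker : IntegrableOn (fun z : E3 => ‖z‖ ^ (-(5:ℝ)/2)) (ball 0 1) volume := by
  set f : E3 → ℝ := fun z => ‖z‖ ^ (-(5:ℝ)/2) with hf
  have hfm : Measurable f := (measurable_norm).pow_const _
  have hfnn : ∀ z, 0 ≤ f z := fun z => rpow_nonneg (norm_nonneg _) _
  constructor
  · exact hfm.aestronglyMeasurable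
  -- finite integral
  rw [hasFiniteIntegral_iff_ofReal (ae_of_all _ (fun z => hfnn z))]
  set r : ℕ → ℝ := fun n => (2:ℝ) ^ (-(n:ℝ)) with hr
  have hrpos : ∀ n, 0 < r n := fun n => rpow_pos_of_pos two_pos _
  have hrmono : ∀ n, r (n + 1) ≤ r n := by
    intro n
    apply rpow_le_rpow_of_exponent_le one_le_two
    push_cast; linarith
  have hr0 : r 0 = 1 := by simp [hr]
  set s : ℕ → Set E3 := fun n => ball (0:E3) (r n) \ ball 0 (r (n+1)) with hs
  have hcover : ball (0:E3) 1 \ {0} ⊆ ⋃ n, s n := by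
    intro z hz
    obtain ⟨hz1, hz0⟩ := hz
    have hz0' : 0 < ‖z‖ := by
      simpa [norm_pos_iff] using hz0
    have hzlt : ‖z‖ < 1 := by simpa using mem_ball_iff_norm.mp hz1
    have hex : ∃ n : ℕ, r (n+1) ≤ ‖z‖ := by
      obtain ⟨n, hn⟩ := exists_pow_lt_of_lt_one hz0' (by norm_num : (1:ℝ)/2 < 1)
      refine ⟨n, ?_⟩
      have : r (n+1) ≤ r n := hrmono n
      have hrn : r n = ((1:ℝ)/2) ^ n := by
        rw [hr]; simp only []
        rw [Real.rpow_neg (by norm_num), Real.rpow_natCast]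
        simp [one_div, inv_pow]
      linarith [hrmono n, hn, hrn ▸ hrmono n]
    classical
    set n := Nat.find hex with hn
    have h1 : r (n+1) ≤ ‖z‖ := Nat.find_spec hex
    have h2 : ‖z‖ < r n := by
      rcases Nat.eq_zero_or_pos n with h | h
      · rw [h, hr0]; exact hzlt
      · obtain ⟨m, hm⟩ := Nat.exists_eq_succ_of_ne_zero h.ne'
        have := Nat.find_min hex (show m < n by omega)
        push_neg at this
        rw [hm]
        simpa using this
    exact Set.mem_iUnion.mpr ⟨n, by
      simp only [hs, Set.mem_diff, mem_ball_zero_iff]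
      exact ⟨h2, not_lt.mpr h1⟩⟩
  have hsm : ∀ n, MeasurableSet (s n) := fun n => measurableSet_ball.diff measurableSet_ball
  have hVlt : volume (ball (0:E3) 1) < ⊤ := measure_ball_lt_top
  set V := volume (ball (0:E3) 1) with hV
  set q : ℝ≥0∞ := ENNReal.ofReal ((2:ℝ) ^ (-(1:ℝ)/2)) with hq
  have hq1 : q < 1 := by
    rw [hq, ← ENNReal.ofReal_one]
    refine ENNReal.ofReal_lt_ofReal_iff one_pos |>.mpr ?_
    exact Real.rpow_lt_one_of_one_lt_of_neg one_lt_two (by norm_num)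
  have key : ∀ n : ℕ, (r (n+1)) ^ (-(5:ℝ)/2) * (r n) ^ (3:ℕ)
      = 2 ^ ((5:ℝ)/2) * ((2:ℝ) ^ (-(1:ℝ)/2)) ^ n := by
    intro n
    rw [hr]; simp only []
    rw [← Real.rpow_natCast ((2:ℝ) ^ (-((n:ℝ)))) 3, ← Real.rpow_natCast ((2:ℝ) ^ (-(1:ℝ)/2)) n,
      ← Real.rpow_mul (by norm_num : (0:ℝ) ≤ 2), ← Real.rpow_mul (by norm_num : (0:ℝ) ≤ 2),
      ← Real.rpow_mul (by norm_num : (0:ℝ) ≤ 2), ← Real.rpow_add two_pos,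
      ← Real.rpow_add two_pos]
    congr 1
    push_cast
    ring
  calc ∫⁻ z in ball (0:E3) 1, ENNReal.ofReal (f z)
      = ∫⁻ z in ball (0:E3) 1 \ {0}, ENNReal.ofReal (f z) := by
        refine setLIntegral_congr ?_
        refine (MeasureTheory.ae_eq_set).mpr ⟨?_, ?_⟩
        · refine measure_mono_null (fun z hz => ?_) (measure_singleton (0:E3))
          simp only [Set.mem_diff, Set.mem_singleton_iff, not_and, not_not] at hz ⊢
          exact hz.2 hz.1
        · refine measure_mono_null (fun z hz => ?_) (measure_empty (μ := volume) (α := E3))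
          simp only [Set.mem_diff] at hz
          exact absurd hz.1.1 (by simp [hz.2])
    _ ≤ ∫⁻ z in ⋃ n, s n, ENNReal.ofReal (f z) := lintegral_mono_set hcover
    _ ≤ ∑' n, ∫⁻ z in s n, ENNReal.ofReal (f z) := lintegral_iUnion_le _ _
    _ ≤ ∑' n, ENNReal.ofReal ((r (n+1)) ^ (-(5:ℝ)/2)) * (ENNReal.ofReal ((r n) ^ (3:ℕ)) * V) := by
        refine ENNReal.tsum_le_tsum fun n => ?_
        have hub : ∫⁻ z in s n, ENNReal.ofReal (f z)
            ≤ ∫⁻ _ in s n, ENNReal.ofReal ((r (n+1)) ^ (-(5:ℝ)/2)) := by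
          refine lintegral_mono_ae ((ae_restrict_iff' (hsm n)).mpr (ae_of_all _ fun z hz => ?_))
          refine ENNReal.ofReal_le_ofReal ?_
          have hzge : r (n+1) ≤ ‖z‖ := by
            have := hz.2
            simpa [mem_ball_zero_iff, not_lt] using this
          exact Real.rpow_le_rpow_of_nonpos (hrpos (n+1)) hzge (by norm_num)
        refine hub.trans ?_
        rw [setLIntegral_const]
        refine mul_le_mul_right ?_ _
        calc volume (s n) ≤ volume (ball (0:E3) (r n)) := measure_mono Set.diff_subset
          _ = ENNReal.ofReal ((r n) ^ (3:ℕ)) * V := by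
              rw [hV, Measure.addHaar_ball (volume : Measure E3) 0 (hrpos n).le]
              norm_num
    _ = ∑' n : ℕ, (ENNReal.ofReal ((2:ℝ) ^ ((5:ℝ)/2)) * V) * q ^ n := by
        refine tsum_congr fun n => ?_
        rw [← mul_assoc, ← ENNReal.ofReal_mul (Real.rpow_nonneg (hrpos (n+1)).le _), key n,
          ENNReal.ofReal_mul (Real.rpow_nonneg (by norm_num) _), hq,
          ← ENNReal.ofReal_pow (Real.rpow_nonneg (by norm_num) _)]
        ring
    _ = (ENNReal.ofReal ((2:ℝ) ^ ((5:ℝ)/2)) * V) * (1 - q)⁻¹ := by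
        rw [ENNReal.tsum_mul_left, ENNReal.tsum_geometric]
    _ < ⊤ := by
        refine ENNReal.mul_lt_top (ENNReal.mul_lt_top ENNReal.ofReal_lt_top hVlt) ?_
        exact ENNReal.inv_lt_top.mpr (by simpa [tsub_pos_iff_lt] using hq1)

lemma young53 {a b : ℝ} (ha : 0 ≤ a) (hb : 0 ≤ b) :
    a * b ≤ a ^ ((5:ℝ)/3) + b ^ ((5:ℝ)/2) := by
  rcases le_or_gt a (b ^ ((3:ℝ)/2)) with h | h
  · have h1 : a * b ≤ b ^ ((3:ℝ)/2) * b := mul_le_mul_of_nonneg_right h hb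
    have h2 : b ^ ((3:ℝ)/2) * b = b ^ ((5:ℝ)/2) := by
      rcases eq_or_lt_of_le hb with hb0 | hb0
      · rw [← hb0]
        rw [Real.zero_rpow (by norm_num), Real.zero_rpow (by norm_num), zero_mul]
      · rw [← Real.rpow_add_one hb0.ne']
        norm_num
    calc a * b ≤ b ^ ((3:ℝ)/2) * b := h1
      _ = b ^ ((5:ℝ)/2) := h2
      _ ≤ a ^ ((5:ℝ)/3) + b ^ ((5:ℝ)/2) := le_add_of_nonneg_left (rpow_nonneg ha _)
  · have ha0 : 0 < a := lt_of_le_of_lt (rpow_nonneg hb _) h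
    have hba : b ≤ a ^ ((2:ℝ)/3) := by
      rcases eq_or_lt_of_le hb with hb0 | hb0
      · rw [← hb0]; exact rpow_nonneg ha0.le _
      · have := Real.rpow_le_rpow (rpow_nonneg hb _) h.le (by norm_num : (0:ℝ) ≤ 2/3)
        rwa [← Real.rpow_mul hb, show ((3:ℝ)/2) * (2/3) = 1 by norm_num, Real.rpow_one] at this
    have h1 : a * b ≤ a * a ^ ((2:ℝ)/3) := mul_le_mul_of_nonneg_left hba ha
    have h2 : a * a ^ ((2:ℝ)/3) = a ^ ((5:ℝ)/3) := by
      rw [mul_comm, ← Real.rpow_add_one ha0.ne']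
      norm_num
    calc a * b ≤ a ^ ((5:ℝ)/3) := h2 ▸ h1
      _ ≤ a ^ ((5:ℝ)/3) + b ^ ((5:ℝ)/2) := le_add_of_nonneg_right (rpow_nonneg hb _)

/-- constant `K = ∫_{B(0,1)} ‖z‖^{-5/2}` -/
def Kc : ℝ := ∫ z in ball (0:E3) 1, ‖z‖ ^ (-(5:ℝ)/2)

lemma Kc_nonneg : 0 ≤ Kc :=
  integral_nonneg fun z => rpow_nonneg (norm_nonneg _) _

lemma integrableOn_ker_shift (x : E3) :
    IntegrableOn (fun y : E3 => ‖x - y‖ ^ (-(5:ℝ)/2)) (ball x 1) volume := by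
  have hmp := Measure.measurePreserving_sub_left (volume : Measure E3) x
  have hemb : MeasurableEmbedding (fun y : E3 => x - y) :=
    (MeasurableEquiv.subLeft x).measurableEmbedding
  have hpre : (fun y : E3 => x - y) ⁻¹' ball (0:E3) 1 = ball x 1 := by
    ext y
    simp only [Set.mem_preimage, mem_ball, mem_ball_zero_iff, dist_eq_norm, norm_sub_rev, sub_zero]
  have := (hmp.integrableOn_comp_preimage hemb
    (s := ball (0:E3) 1) (f := fun z : E3 => ‖z‖ ^ (-(5:ℝ)/2))).mpr integrableOn_ker
  rwa [hpre] at this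

lemma ker_shift_integral (x : E3) :
    ∫ y in ball x 1, ‖x - y‖ ^ (-(5:ℝ)/2) = Kc := by
  have hmp := Measure.measurePreserving_sub_left (volume : Measure E3) x
  have hemb : MeasurableEmbedding (fun y : E3 => x - y) :=
    (MeasurableEquiv.subLeft x).measurableEmbedding
  have hpre : (fun y : E3 => x - y) ⁻¹' ball (0:E3) 1 = ball x 1 := by
    ext y
    simp only [Set.mem_preimage, mem_ball, mem_ball_zero_iff, dist_eq_norm, norm_sub_rev, sub_zero]
  have := hmp.setIntegral_preimage_emb hemb
    (fun z : E3 => ‖z‖ ^ (-(5:ℝ)/2)) (ball (0:E3) 1)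
  rw [hpre] at this
  exact this

lemma Dint_le {N : ℝ} {ρ : E3 → ℝ} (h : AdmInf N ρ) {ε : ℝ} (hε : 0 < ε) :
    Dint ρ ≤ (1/2) * ((∫ x : E3, ρ x) *
      (ε ^ ((5:ℝ)/3) * (∫ x : E3, ρ x ^ ((5:ℝ)/3)) + ε ^ (-(5:ℝ)/2) * Kc + N)) := by
  obtain ⟨h0, h1, h53, hNeq⟩ := h
  set T : ℝ := ∫ x : E3, ρ x ^ ((5:ℝ)/3) with hTdef
  have hT0 : 0 ≤ T := integral_nonneg fun x => rpow_nonneg (h0 x) _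
  have hN0 : 0 ≤ N := hNeq ▸ integral_nonneg h0
  set M : ℝ := ε ^ ((5:ℝ)/3) * T + ε ^ (-(5:ℝ)/2) * Kc + N with hMdef
  have hM0 : 0 ≤ M := by
    have := Kc_nonneg
    have h1' : (0:ℝ) ≤ ε ^ ((5:ℝ)/3) := rpow_nonneg hε.le _
    have h2' : (0:ℝ) ≤ ε ^ (-(5:ℝ)/2) := rpow_nonneg hε.le _
    have h3' := mul_nonneg h1' hT0
    have h4' := mul_nonneg h2' this
    rw [hMdef]
    linarith
  have key : ∀ x : E3, (∫ y : E3, ρ x * ρ y / ‖x - y‖) ≤ ρ x * M := by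
    intro x
    by_cases hInt : Integrable (fun y : E3 => ρ x * ρ y / ‖x - y‖) volume
    swap
    · rw [integral_undef hInt]
      exact mul_nonneg (h0 x) hM0
    rcases eq_or_lt_of_le (h0 x) with hρx | hρx
    · have : (fun y : E3 => ρ x * ρ y / ‖x - y‖) = fun _ => (0:ℝ) := by
        funext y; rw [← hρx]; ring
      rw [this, integral_zero, ← hρx, zero_mul]
    have hmd : (fun y : E3 => ρ x * ρ y / ‖x - y‖)
        = fun y : E3 => ρ x * (ρ y / ‖x - y‖) := by
      funext y; ring
    rw [hmd] at hInt ⊢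
    rw [integral_const_mul]
    refine mul_le_mul_of_nonneg_left ?_ (h0 x)
    have hInt' : Integrable (fun y : E3 => ρ y / ‖x - y‖) volume := by
      have h2' := hInt.const_mul (ρ x)⁻¹
      refine h2'.congr (ae_of_all _ fun y => ?_)
      field_simp
    rw [← integral_add_compl (measurableSet_ball (x := x) (ε := 1)) hInt']
    have hcompl : ∫ y in (ball x 1)ᶜ, ρ y / ‖x - y‖ ≤ N := by
      calc ∫ y in (ball x 1)ᶜ, ρ y / ‖x - y‖ ≤ ∫ y in (ball x 1)ᶜ, ρ y := by
            refine setIntegral_mono_on hInt'.integrableOn h1.integrableOn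
              measurableSet_ball.compl fun y hy => ?_
            have h1y : (1:ℝ) ≤ ‖x - y‖ := by
              have hd : ¬ dist y x < 1 := by simpa [mem_ball] using hy
              have := not_lt.mp hd
              rwa [dist_eq_norm, norm_sub_rev] at this
            exact div_le_self (h0 y) h1y
        _ ≤ ∫ y, ρ y := setIntegral_le_integral h1 (ae_of_all _ h0)
        _ = N := hNeq
    have hball : ∫ y in ball x 1, ρ y / ‖x - y‖
        ≤ ε ^ ((5:ℝ)/3) * T + ε ^ (-(5:ℝ)/2) * Kc := by
      have hker := integrableOn_ker_shift x
      have hptw : ∀ y ∈ ball x 1, ρ y / ‖x - y‖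
          ≤ ε ^ ((5:ℝ)/3) * ρ y ^ ((5:ℝ)/3) + ε ^ (-(5:ℝ)/2) * ‖x - y‖ ^ (-(5:ℝ)/2) := by
        intro y _
        rcases eq_or_lt_of_le (norm_nonneg (x - y)) with hn0 | hn0
        · rw [← hn0, div_zero, Real.zero_rpow (by norm_num), mul_zero, add_zero]
          exact mul_nonneg (rpow_nonneg hε.le _) (rpow_nonneg (h0 y) _)
        · have hy := young53 (mul_nonneg hε.le (h0 y))
            (le_of_lt (by positivity : (0:ℝ) < ‖x - y‖⁻¹ / ε))
          have heq : ε * ρ y * (‖x - y‖⁻¹ / ε) = ρ y / ‖x - y‖ := by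
            field_simp
          rw [heq] at hy
          refine hy.trans (le_of_eq ?_)
          rw [show (-(5:ℝ)/2) = -((5:ℝ)/2) by norm_num,
            Real.mul_rpow hε.le (h0 y),
            Real.div_rpow (inv_nonneg.mpr (norm_nonneg _)) hε.le,
            Real.inv_rpow (norm_nonneg _),
            Real.rpow_neg (norm_nonneg _), Real.rpow_neg hε.le]
          ring
      calc ∫ y in ball x 1, ρ y / ‖x - y‖
          ≤ ∫ y in ball x 1,
              (ε ^ ((5:ℝ)/3) * ρ y ^ ((5:ℝ)/3) + ε ^ (-(5:ℝ)/2) * ‖x - y‖ ^ (-(5:ℝ)/2)) := by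
            refine setIntegral_mono_on hInt'.integrableOn
              (((h53.integrableOn).const_mul _).add (hker.const_mul _)) measurableSet_ball hptw
        _ = ε ^ ((5:ℝ)/3) * (∫ y in ball x 1, ρ y ^ ((5:ℝ)/3))
              + ε ^ (-(5:ℝ)/2) * ∫ y in ball x 1, ‖x - y‖ ^ (-(5:ℝ)/2) := by
            rw [integral_add ((h53.integrableOn).const_mul _) (hker.const_mul _),
              integral_const_mul, integral_const_mul]
        _ ≤ ε ^ ((5:ℝ)/3) * T + ε ^ (-(5:ℝ)/2) * Kc := by
            rw [ker_shift_integral x]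
            refine add_le_add (mul_le_mul_of_nonneg_left ?_ (rpow_nonneg hε.le _)) le_rfl
            exact setIntegral_le_integral h53 (ae_of_all _ fun y => rpow_nonneg (h0 y) _)
    linarith
  unfold Dint
  rw [hNeq]
  refine mul_le_mul_of_nonneg_left ?_ (by norm_num)
  calc (∫ x : E3, ∫ y : E3, ρ x * ρ y / ‖x - y‖) ≤ ∫ x : E3, ρ x * M := by
        refine integral_mono_of_nonneg (ae_of_all _ fun x => ?_) (h1.mul_const M)
          (ae_of_all _ key)
        exact integral_nonneg fun y =>
          div_nonneg (mul_nonneg (h0 x) (h0 y)) (norm_nonneg _)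
    _ = N * M := by rw [integral_mul_const, hNeq]

end VirialAux

/-- Virial identity for minimizers of the limit problem:
`(3/(5m))(6π²/q)^{2/3} ∫ρ_∞^{5/3} = κ D(ρ_∞,ρ_∞)`; equivalently
`κ D(ρ_∞,ρ_∞) = −2 𝔈_∞(ρ_∞) = 2 ∫ j_∞(ρ_∞)`. -/
theorem virial_identity_inf (q m κ N : ℝ) (hq : 1 ≤ q) (hm : 0 < m) (hκ : 0 < κ)
    (hN : 0 < N) (ρ : E3 → ℝ) (hmin : IsMinInf q m κ N ρ) :
    (3 / (5 * m)) * (6 * π ^ 2 / q) ^ ((2 : ℝ) / 3) *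
        (∫ x : E3, ρ x ^ ((5 : ℝ) / 3)) = κ * Dint ρ ∧
      κ * Dint ρ = -2 * Einffun q m κ ρ ∧
      κ * Dint ρ = 2 * ∫ x : E3, jinf q m (ρ x) := by
  have hq0 : (0:ℝ) < q := lt_of_lt_of_le one_pos hq
  obtain ⟨c, hc0, hjinf, h2c⟩ :
      ∃ c : ℝ, 0 < c ∧
        (∀ σ : E3 → ℝ, (∫ x : E3, jinf q m (σ x)) = c * ∫ x : E3, σ x ^ ((5:ℝ)/3)) ∧
        3 / (5 * m) * (6 * π ^ 2 / q) ^ ((2 : ℝ) / 3) = 2 * c := by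
    refine ⟨3 / (10 * m) * (6 * π ^ 2 / q) ^ ((2:ℝ)/3), ?_, fun σ => jinf_integral_eq q m σ, ?_⟩
    · have hπ := Real.pi_pos
      have hb : (0:ℝ) < 6 * π ^ 2 / q := by positivity
      have := Real.rpow_pos_of_pos hb ((2:ℝ)/3)
      positivity
    · field_simp
      ring
  obtain ⟨h0, h1, h53, hNeq⟩ := hmin.1
  have hT0 : 0 ≤ ∫ x : E3, ρ x ^ ((5:ℝ)/3) :=
    integral_nonneg fun x => Real.rpow_nonneg (h0 x) _
  -- lower bound: the admissible image is bounded below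
  have hbdd : BddBelow (Einffun q m κ '' {σ | AdmInf N σ}) := by
    obtain ⟨ε, hε0, hεkey⟩ : ∃ ε : ℝ, 0 < ε ∧ κ * N * ε ^ ((5:ℝ)/3) / 2 ≤ c := by
      have hbpos : (0:ℝ) < 2 * c / (κ * N) := by positivity
      refine ⟨min 1 ((2 * c / (κ * N)) ^ ((3:ℝ)/5)),
        lt_min one_pos (Real.rpow_pos_of_pos hbpos _), ?_⟩
      have h1' : min 1 ((2 * c / (κ * N)) ^ ((3:ℝ)/5)) ≤ (2 * c / (κ * N)) ^ ((3:ℝ)/5) :=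
        min_le_right _ _
      have h2' : (min 1 ((2 * c / (κ * N)) ^ ((3:ℝ)/5))) ^ ((5:ℝ)/3)
          ≤ ((2 * c / (κ * N)) ^ ((3:ℝ)/5)) ^ ((5:ℝ)/3) :=
        Real.rpow_le_rpow (le_min zero_le_one (Real.rpow_nonneg hbpos.le _)) h1' (by norm_num)
      rw [← Real.rpow_mul hbpos.le, show (3:ℝ)/5 * (5/3) = 1 by norm_num,
        Real.rpow_one] at h2'
      have h3' : (min 1 ((2 * c / (κ * N)) ^ ((3:ℝ)/5))) ^ ((5:ℝ)/3) * (κ * N) ≤ 2 * c :=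
        (le_div_iff₀ (by positivity : (0:ℝ) < κ * N)).mp h2'
      linarith
    refine ⟨-(κ * ((1/2) * (N * (ε ^ (-(5:ℝ)/2) * Kc + N)))), ?_⟩
    rintro v ⟨σ, hσ, rfl⟩
    have hσ' : AdmInf N σ := hσ
    obtain ⟨g0, g1, g53, gN⟩ := hσ'
    have hS0 : 0 ≤ ∫ x : E3, σ x ^ ((5:ℝ)/3) :=
      integral_nonneg fun x => Real.rpow_nonneg (g0 x) _
    have hD := Dint_le hσ hε0
    rw [gN] at hD
    have hDκ := mul_le_mul_of_nonneg_left hD hκ.le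
    have hmul := mul_le_mul_of_nonneg_right hεkey hS0
    unfold Einffun
    rw [hjinf σ]
    nlinarith [hDκ, hmul, hS0]
  -- scaling inequality
  have hineq : ∀ l : ℝ, 0 < l →
      c * (∫ x : E3, ρ x ^ ((5:ℝ)/3)) - κ * Dint ρ
        ≤ l ^ (2:ℕ) * (c * (∫ x : E3, ρ x ^ ((5:ℝ)/3))) - l * (κ * Dint ρ) := by
    intro l hl
    have hle : Einffun q m κ ρ ≤ Einffun q m κ (fun x => l ^ 3 * ρ (l • x)) := by
      rw [hmin.2]
      exact csInf_le hbdd ⟨_, AdmInf_scale hmin.1 hl, rfl⟩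
    have hEρ : Einffun q m κ ρ
        = c * (∫ x : E3, ρ x ^ ((5:ℝ)/3)) - κ * Dint ρ := by
      unfold Einffun; rw [hjinf ρ]
    have hEscale : Einffun q m κ (fun x => l ^ 3 * ρ (l • x))
        = l ^ (2:ℕ) * (c * (∫ x : E3, ρ x ^ ((5:ℝ)/3))) - l * (κ * Dint ρ) := by
      unfold Einffun
      rw [hjinf (fun x => l ^ 3 * ρ (l • x))]
      have hI : (∫ x : E3, (fun x => l ^ 3 * ρ (l • x)) x ^ ((5:ℝ)/3))
          = l ^ (2:ℕ) * ∫ x : E3, ρ x ^ ((5:ℝ)/3) := by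
        simpa using int53_scale h0 hl
      rw [hI, Dint_scale ρ hl]
      ring
    rw [hEρ, hEscale] at hle
    exact hle
  -- conclude the virial identity
  have hkey : κ * Dint ρ = 2 * (c * (∫ x : E3, ρ x ^ ((5:ℝ)/3))) := by
    set A := c * (∫ x : E3, ρ x ^ ((5:ℝ)/3)) with hA
    set B := κ * Dint ρ with hB
    have hA0 : 0 ≤ A := mul_nonneg hc0.le hT0
    by_contra hne
    have habs : ∀ e : ℝ, 0 < e → e < 1 → |2 * A - B| ≤ e * A := by
      intro e he he1
      have hp := hineq (1 + e) (by linarith)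
      have hm' := hineq (1 - e) (by linarith)
      rw [abs_le]
      constructor <;> nlinarith
    have hδ : 0 < |2 * A - B| := abs_pos.mpr (fun hh => hne (by linarith))
    have h12 := habs (1/2) (by norm_num) (by norm_num)
    have hApos : 0 < A := by linarith
    have he0 : 0 < |2 * A - B| / (2 * A) := div_pos hδ (by linarith)
    have he1 : |2 * A - B| / (2 * A) < 1 := by
      rw [div_lt_one (by linarith)]
      linarith
    have hfin := habs _ he0 he1
    have : |2 * A - B| / (2 * A) * A = |2 * A - B| / 2 := by
      field_simp
    rw [this] at hfin
    linarith
  refine ⟨?_, ?_, ?_⟩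
  · rw [h2c, hkey]; ring
  · have hEρ : Einffun q m κ ρ
        = c * (∫ x : E3, ρ x ^ ((5:ℝ)/3)) - κ * Dint ρ := by
      unfold Einffun; rw [hjinf ρ]
    rw [hEρ]
    linarith [hkey]
  · rw [hjinf ρ]
    linarith [hkey]
end
end
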